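/- arXiv:2204.08982 — 2 statements merged into one kernel-verified Lean document; each statement's English description precedes it below -/
import Mathlib

section
/- The only triple of the form (q, 3·2^p, q+2) with q, q+2, and p all prime is (11, 12, 13), i.e., if q and q+2 are prime and q+1 = 3·2^p with p prime, then p = 2 and q = 11. -/
/-! For odd `p` we have `5 ∣ 4 ^ p + 1`, and `q (q + 2) + 10 = (q + 1) ^ 2 + 9 = 9 (4 ^ p + 1)`, so one
of the twin primes `q`, `q + 2` is `5`; this is impossible since `q + 1 ≥ 3 · 2 ^ 2`. Hence `p = 2`. -/

theorem five_dvd_mul_add_two_of_odd {q p : ℕ} (hp : Odd p) (h : q + 1 = 3 * 2 ^ p) :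
    5 ∣ q * (q + 2) := by
  have h4 : 4 + 1 ∣ 4 ^ p + 1 ^ p := hp.nat_add_dvd_pow_add_pow 4 1
  have key : q * (q + 2) + 10 = 9 * (4 ^ p + 1 ^ p) := by
    calc q * (q + 2) + 10 = (q + 1) ^ 2 + 9 := by ring
      _ = 9 * (4 ^ p + 1 ^ p) := by
        rw [h, one_pow, show (4 : ℕ) = 2 ^ 2 by rfl, ← pow_mul, mul_comm 2 p, pow_mul]
        ring
  exact (Nat.dvd_add_left (by norm_num)).1 (key ▸ Dvd.dvd.mul_left h4 9)

theorem twin_primes_around_three_two_pow (q p : ℕ) (hq : Nat.Prime q)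
    (hq2 : Nat.Prime (q + 2)) (hp : Nat.Prime p) (h : q + 1 = 3 * 2 ^ p) :
    p = 2 ∧ q = 11 := by
  rcases hp.eq_two_or_odd' with rfl | hodd
  · exact ⟨rfl, by omega⟩
  have hq_large : 12 ≤ q + 1 := h ▸ Nat.mul_le_mul_left 3 (Nat.pow_le_pow_right two_pos hp.two_le)
  rcases Nat.prime_five.dvd_mul.1 (five_dvd_mul_add_two_of_odd hodd h) with h5 | h5
  · have := (Nat.prime_dvd_prime_iff_eq Nat.prime_five hq).1 h5
    omega
  · have := (Nat.prime_dvd_prime_iff_eq Nat.prime_five hq2).1 h5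
    omega
end

section
/- There is no prime p and prime q and prime r with 2^p + 1 = q^r except p = 3, q = 3, r = 2 (i.e., 2^3 + 1 = 3^2). -/
/-!
If `r` is odd, `q ^ r - 1 = (q - 1) * (1 + q + ⋯ + q ^ (r - 1))`; since `q` is odd, the second
factor is an odd divisor of `2 ^ p`, hence `1`, forcing `r = 1`. So `r = 2`, and then
`(q - 1) * (q + 1) = 2 ^ p` makes `q - 1` and `q + 1` powers of two differing by `2`,
i.e. `2` and `4`.
-/

open Finset

namespace Nat

lemma odd_geom_sum_iff {q : ℕ} (hq : Odd q) (n : ℕ) :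
    Odd (∑ i ∈ range n, q ^ i) ↔ Odd n := by
  induction n with
  | zero => simp
  | succ n ih =>
    rw [sum_range_succ, Nat.odd_add, ih, Nat.odd_add_one, ← Nat.not_odd_iff_even]
    simp [hq.pow]

lemma eq_one_of_odd_of_dvd_two_pow {d n : ℕ} (hd : Odd d) (hdvd : d ∣ 2 ^ n) : d = 1 :=
  Coprime.eq_one_of_dvd (hd.coprime_two_right.pow_right n) hdvd

lemma eq_one_of_pow_eq_two_pow_add_one_of_odd {p q r : ℕ} (h : q ^ r = 2 ^ p + 1)
    (hr : Odd r) : r = 1 := by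
  rcases Nat.eq_zero_or_pos p with rfl | hp
  · exact Prime.eq_one_of_pow (by rw [h]; norm_num)
  have hq : Odd q :=
    (Nat.odd_pow_iff hr.pos.ne').1 (h ▸ (Nat.even_pow.2 ⟨even_two, hp.ne'⟩).add_one)
  obtain ⟨x, rfl⟩ := exists_eq_add_one_of_ne_zero hq.pos.ne'
  have hgeom : (∑ i ∈ range r, (x + 1) ^ i) * x = 2 ^ p := by
    have := geom_sum_mul_add x r
    omega
  have hgeom_eq_one : ∑ i ∈ range r, (x + 1) ^ i = 1 :=
    eq_one_of_odd_of_dvd_two_pow ((odd_geom_sum_iff hq r).2 hr) (Dvd.intro x hgeom)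
  have hr_le : r ≤ ∑ i ∈ range r, (x + 1) ^ i := by
    simpa using card_nsmul_le_sum (range r) (fun i => (x + 1) ^ i) 1
      fun i _ => one_le_pow _ _ x.succ_pos
  have := hr.pos
  omega

lemma eq_one_and_eq_two_of_two_pow_add_two_eq_two_pow {i j : ℕ} (h : 2 ^ i + 2 = 2 ^ j) :
    i = 1 ∧ j = 2 := by
  have hij : i < j := (Nat.pow_lt_pow_iff_right one_lt_two).1 (by omega)
  have hi : i ≤ 1 := by
    have : 2 ^ i ∣ 2 ^ 1 := (Nat.dvd_add_right (dvd_refl _)).1 (h ▸ pow_dvd_pow 2 hij.le)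
    exact (pow_dvd_pow_iff_le_right one_lt_two).1 this
  have hj : j ≤ 2 := by
    have : 2 ^ i ≤ 2 ^ 1 := Nat.pow_le_pow_right two_pos hi
    exact (Nat.pow_le_pow_iff_right one_lt_two).1 (by omega : 2 ^ j ≤ 2 ^ 2)
  interval_cases i <;> interval_cases j <;> simp_all

lemma eq_three_and_eq_three_of_sq_eq_two_pow_add_one {a p : ℕ} (h : a ^ 2 = 2 ^ p + 1) :
    a = 3 ∧ p = 3 := by
  obtain ⟨m, rfl⟩ := exists_eq_add_one_of_ne_zero (n := a) (by rintro rfl; simp at h)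
  have hprod : m * (m + 2) = 2 ^ p := by linarith [h]
  obtain ⟨i, -, rfl⟩ := (dvd_prime_pow prime_two).1 (Dvd.intro _ hprod)
  obtain ⟨j, -, hj⟩ := (dvd_prime_pow prime_two).1 (Dvd.intro_left _ hprod)
  obtain ⟨rfl, rfl⟩ := eq_one_and_eq_two_of_two_pow_add_two_eq_two_pow hj
  exact ⟨rfl, Nat.pow_right_injective le_rfl hprod.symm⟩

end Nat

theorem catalan_eight_nine_general (p q r : ℕ) (hr : Nat.Prime r) (h : 2 ^ p + 1 = q ^ r) :
    p = 3 ∧ q = 3 ∧ r = 2 := by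
  obtain rfl | hodd := hr.eq_two_or_odd'
  · obtain ⟨rfl, rfl⟩ := Nat.eq_three_and_eq_three_of_sq_eq_two_pow_add_one h.symm
    exact ⟨rfl, rfl, rfl⟩
  · exact absurd (Nat.eq_one_of_pow_eq_two_pow_add_one_of_odd h.symm hodd) hr.one_lt.ne'

theorem catalan_eight_nine (p q r : ℕ) (hp : Nat.Prime p) (hq : Nat.Prime q)
    (hr : Nat.Prime r) (h : 2 ^ p + 1 = q ^ r) : p = 3 ∧ q = 3 ∧ r = 2 :=
  catalan_eight_nine_general p q r hr h
end
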